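/- arXiv:2107.03265 — 8 statements merged into one kernel-verified Lean document; each statement's English description precedes it below -/
import Mathlib

section
/- Let ⟨Args, att⟩ be an argumentation framework such that the set of complete extensions is nonempty, and let A ∈ Args be skeptically accepted with respect to complete semantics, i.e., A belongs to every complete extension. Then ⋃_{E a complete extension} DefBy(A, E) = ∅ if and only if there is no B ∈ Args with att B A. -/
namespace AF

variable {Args : Type*}

/-- A set `S` attacks argument `B` if some element of `S` attacks `B`. -/
def SetAttacks (att : Args → Args → Prop) (S : Set Args) (B : Args) : Prop :=
  ∃ C ∈ S, att C B

/-- `S` defends `A` if `S` attacks every attacker of `A`. -/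
def Defends (att : Args → Args → Prop) (S : Set Args) (A : Args) : Prop :=
  ∀ B, att B A → SetAttacks att S B

/-- `S` is conflict-free if no element of `S` attacks an element of `S`. -/
def ConflictFree (att : Args → Args → Prop) (S : Set Args) : Prop :=
  ¬ ∃ C ∈ S, ∃ D ∈ S, att C D

/-- `S` is admissible if it is conflict-free and defends all its elements. -/
def Admissible (att : Args → Args → Prop) (S : Set Args) : Prop :=
  ConflictFree att S ∧ ∀ A ∈ S, Defends att S A

/-- `S` is a complete extension if it is admissible and contains every argument it defends. -/
def IsComplete (att : Args → Args → Prop) (S : Set Args) : Prop :=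
  Admissible att S ∧ ∀ A, Defends att S A → A ∈ S

/-- An attack path from `A` to `B` of length `n`. -/
def AttackPath (att : Args → Args → Prop) (A B : Args) (n : ℕ) : Prop :=
  ∃ C : ℕ → Args, C 0 = A ∧ C n = B ∧ ∀ i < n, att (C i) (C (i + 1))

/-- `A` (in)directly attacks `B`: an attack path of odd length from `A` to `B`. -/
def IndAttacks (att : Args → Args → Prop) (A B : Args) : Prop :=
  ∃ n, Odd n ∧ AttackPath att A B n

/-- `A` (in)directly defends `B`: an attack path of even positive length from `A` to `B`. -/
def IndDefends (att : Args → Args → Prop) (A B : Args) : Prop :=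
  ∃ n, 0 < n ∧ Even n ∧ AttackPath att A B n

/-- `DefBy A E`: the elements of `E` that (in)directly defend `A`. -/
def DefBy (att : Args → Args → Prop) (A : Args) (E : Set Args) : Set Args :=
  {B | B ∈ E ∧ IndDefends att B A}

/-- `NotDef A E`: the (in)direct attackers of `A` that are not attacked by `E`. -/
def NotDef (att : Args → Args → Prop) (A : Args) (E : Set Args) : Set Args :=
  {B | IndAttacks att B A ∧ ¬ SetAttacks att E B}

/-- `A` is conflict-relevant for `B`. -/
def ConflictRelevant (att : Args → Args → Prop) (A B : Args) : Prop :=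
  IndAttacks att A B ∧ ¬ att A A

/-- The foil of `A`: its direct attackers. -/
def Foil (att : Args → Args → Prop) (A : Args) : Set Args :=
  {B | att B A}

end AF

open AF

theorem stmt3 {Args : Type*} (att : Args → Args → Prop)
    (hne : ∃ E : Set Args, IsComplete att E) (A : Args)
    (hA : ∀ E : Set Args, IsComplete att E → A ∈ E) :
    (⋃ E ∈ {E : Set Args | IsComplete att E}, DefBy att A E) = ∅ ↔
      ¬ ∃ B : Args, att B A := by
  constructor
  · rintro h ⟨B, hB⟩
    obtain ⟨E, hE⟩ := hne
    have hAE := hA E hE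
    obtain ⟨C, hCE, hCB⟩ := hE.1.2 A hAE B hB
    have hmem : C ∈ DefBy att A E := by
      refine ⟨hCE, 2, by norm_num, by norm_num, ?_⟩
      refine ⟨fun i => if i = 0 then C else if i = 1 then B else A, rfl, rfl, ?_⟩
      intro i hi
      interval_cases i <;> simpa
    have : C ∈ (⋃ E ∈ {E : Set Args | IsComplete att E}, DefBy att A E) := by
      exact Set.mem_biUnion hE hmem
    rw [h] at this
    exact this
  · intro h
    ext x
    simp only [Set.mem_iUnion, Set.mem_empty_iff_false, iff_false]
    rintro ⟨E, hE, hx⟩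
    obtain ⟨-, n, hn, -, C, hC0, hCn, hstep⟩ := hx
    exact h ⟨C (n-1), by have := hstep (n-1) (by omega); rwa [Nat.sub_add_cancel hn, hCn] at this⟩
end

section
/- Let ⟨Args, att⟩ be an argumentation framework such that the set of complete extensions is nonempty, and let A ∈ Args be credulously non-accepted with respect to complete semantics, i.e., A belongs to no complete extension. Then ⋃_{E a complete extension} NotDef(A, E) ≠ ∅. -/
open AF

theorem stmt5 {Args : Type*} (att : Args → Args → Prop)
    (hne : ∃ E : Set Args, IsComplete att E) (A : Args)
    (hA : ∀ E : Set Args, IsComplete att E → A ∉ E) :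
    (⋃ E ∈ {E : Set Args | IsComplete att E}, NotDef att A E) ≠ ∅ := by
  obtain ⟨E, hE⟩ := hne
  intro h
  rw [Set.eq_empty_iff_forall_notMem] at h
  have hdef : Defends att E A := by
    intro B hB
    by_contra hnot
    have hind : IndAttacks att B A :=
      ⟨1, odd_one, fun i => if i = 0 then B else A, by simp, by simp, fun i hi => by
        interval_cases i; simpa using hB⟩
    exact h B (Set.mem_iUnion₂.mpr ⟨E, hE, hind, hnot⟩)
  exact hA E hE (hE.2 A hdef)
end

section
/- Let ⟨Args, att⟩ be an argumentation framework, let E be an admissible set, let A ∈ E and let C ∈ Args with C ∉ E such that A (in)directly attacks C. Then DefBy(A, E) ⊆ NotDef(C, E). -/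
open AF

lemma attackPath_concat {Args : Type*} {att : Args → Args → Prop} {A B C : Args} {m n : ℕ}
    (h1 : AttackPath att A B m) (h2 : AttackPath att B C n) :
    AttackPath att A C (m + n) := by
  obtain ⟨f, hf0, hfm, hf⟩ := h1
  obtain ⟨g, hg0, hgn, hg⟩ := h2
  refine ⟨fun i => if i < m then f i else g (i - m), ?_, ?_, ?_⟩
  · by_cases h : 0 < m
    · simp [h, hf0]
    · have hm : m = 0 := by omega
      simp [hm, hg0, ← hf0, ← hfm, hm]
  · have : ¬ (m + n < m) := by omega
    simp [this, hgn]
  · intro i hi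
    by_cases h1 : i + 1 < m
    · have h2 : i < m := by omega
      simp only [h1, h2, if_pos]
      exact hf i h2
    · by_cases h2 : i < m
      · have he : i + 1 = m := by omega
        simp only [h1, h2, if_pos, if_neg]
        have : g (i + 1 - m) = f m := by rw [he]; simp [hg0, ← hfm]
        rw [this, ← he]
        exact hf i h2
      · simp only [h1, h2, if_neg]
        have : i + 1 - m = (i - m) + 1 := by omega
        rw [this]
        exact hg (i - m) (by omega)

theorem stmt8 {Args : Type*} (att : Args → Args → Prop) (E : Set Args)
    (hE : Admissible att E) (A C : Args) (hA : A ∈ E) (hC : C ∉ E)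
    (hatt : IndAttacks att A C) :
    DefBy att A E ⊆ NotDef att C E := by
  intro B hB
  obtain ⟨hBE, m, hm0, hmE, hpath⟩ := hB
  obtain ⟨n, hn, hpath2⟩ := hatt
  constructor
  · exact ⟨m + n, by rcases hn with ⟨k, hk⟩; rcases hmE with ⟨j, hj⟩; exact ⟨j + k, by omega⟩,
      attackPath_concat hpath hpath2⟩
  · rintro ⟨D, hD, hDB⟩
    exact hE.1 ⟨D, hD, B, hBE, hDB⟩
end

section
/- Let ⟨Args, att⟩ be an argumentation framework, let E be a conflict-free set, let A ∈ E and suppose A (in)directly attacks B. Then A ∈ NotDef(B, E) and DefBy(A, E) ⊆ NotDef(B, E). -/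
open AF

lemma path_comp {Args : Type*} {att : Args → Args → Prop} {D A B : Args} {m n : ℕ}
    (h1 : AttackPath att D A m) (h2 : AttackPath att A B n) :
    AttackPath att D B (m + n) := by
  obtain ⟨C1, hC10, hC1m, hC1⟩ := h1
  obtain ⟨C2, hC20, hC2n, hC2⟩ := h2
  refine ⟨fun i => if i ≤ m then C1 i else C2 (i - m), by simp [hC10], ?_, ?_⟩
  · by_cases h : m + n ≤ m
    · have : n = 0 := by omega
      simp [h, this, hC1m, ← hC20, ← hC2n]
    · simp [h, show m + n - m = n by omega, hC2n]
  · intro i hi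
    rcases Nat.lt_trichotomy i m with h | h | h
    · simp [Nat.le_of_lt h, Nat.succ_le_of_lt h, hC1 i h]
    · subst h
      have hn : 0 < n := by omega
      simp [show ¬ (i + 1 ≤ i) by omega, hC1m, ← hC20]
      have := hC2 0 hn
      simpa using this
    · simp [show ¬ (i ≤ m) by omega, show ¬ (i + 1 ≤ m) by omega]
      have := hC2 (i - m) (by omega)
      rwa [show i + 1 - m = i - m + 1 by omega]

lemma notAttacked {Args : Type*} {att : Args → Args → Prop} {E : Set Args}
    (hE : ConflictFree att E) {A : Args} (hA : A ∈ E) : ¬ SetAttacks att E A := by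
  rintro ⟨C, hC, hCA⟩
  exact hE ⟨C, hC, A, hA, hCA⟩

theorem stmt10 {Args : Type*} (att : Args → Args → Prop) (E : Set Args)
    (hE : ConflictFree att E) (A B : Args) (hA : A ∈ E)
    (hatt : IndAttacks att A B) :
    A ∈ NotDef att B E ∧ DefBy att A E ⊆ NotDef att B E := by
  refine ⟨⟨hatt, notAttacked hE hA⟩, ?_⟩
  rintro D ⟨hD, m, hm, hme, hpath⟩
  obtain ⟨n, hn, hpath2⟩ := hatt
  refine ⟨⟨m + n, ?_, path_comp hpath hpath2⟩, notAttacked hE hD⟩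
  exact hme.add_odd hn
end

section
/- Let ⟨Args, att⟩ be an argumentation framework such that the set of complete extensions is nonempty, and let A, B ∈ Args where A belongs to every complete extension (A is skeptically accepted). If (⋃_{E a complete extension} DefBy(A, E)) ∩ (⋃_{E a complete extension} NotDef(B, E)) = ∅, then ⋃_{E a complete extension} DefBy(A, E) = ∅ or A is not conflict-relevant for B. -/
open AF

lemma path_concat {Args : Type*} {att : Args → Args → Prop} {X Y Z : Args} {m n : ℕ}
    (h1 : AttackPath att X Y m) (h2 : AttackPath att Y Z n) :
    AttackPath att X Z (m + n) := by
  obtain ⟨P, hP0, hPm, hP⟩ := h1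
  obtain ⟨Q, hQ0, hQn, hQ⟩ := h2
  refine ⟨fun i => if i < m then P i else Q (i - m), ?_, ?_, ?_⟩
  · by_cases hm : 0 < m
    · simp [hm, hP0]
    · have hm0 : m = 0 := by omega
      simp [hm0, hQ0, ← hP0, hm0 ▸ hPm]
  · have : ¬ m + n < m := by omega
    simp [this, hQn]
  · intro i hi
    by_cases hi1 : i < m
    · by_cases hi2 : i + 1 < m
      · simpa [hi1, hi2] using hP i hi1
      · have him : i + 1 = m := by omega
        have : i + 1 - m = 0 := by omega
        simp only [if_pos hi1, if_neg hi2, this, hQ0, ← hPm]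
        exact him ▸ hP i hi1
    · have h1 : ¬ i + 1 < m := by omega
      have h2 : i + 1 - m = i - m + 1 := by omega
      simp only [if_neg hi1, if_neg h1, h2]
      exact hQ (i - m) (by omega)

theorem stmt11 {Args : Type*} (att : Args → Args → Prop)
    (hne : ∃ E : Set Args, IsComplete att E) (A B : Args)
    (hA : ∀ E : Set Args, IsComplete att E → A ∈ E)
    (h : (⋃ E ∈ {E : Set Args | IsComplete att E}, DefBy att A E) ∩
         (⋃ E ∈ {E : Set Args | IsComplete att E}, NotDef att B E) = ∅) :
    (⋃ E ∈ {E : Set Args | IsComplete att E}, DefBy att A E) = ∅ ∨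
      ¬ ConflictRelevant att A B := by
  by_cases hU : (⋃ E ∈ {E : Set Args | IsComplete att E}, DefBy att A E) = ∅
  · exact Or.inl hU
  · right
    rintro ⟨⟨n, hodd, hpath⟩, -⟩
    obtain ⟨C, hC⟩ := Set.nonempty_iff_ne_empty.mpr hU
    simp only [Set.mem_iUnion] at hC
    obtain ⟨E, hE, hCE, m, hm0, hmeven, hmpath⟩ := hC
    have hCB : IndAttacks att C B := ⟨m + n, hmeven.add_odd hodd, path_concat hmpath hpath⟩
    have hnoatt : ¬ SetAttacks att E C := by
      rintro ⟨D, hD, hDC⟩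
      exact hE.1.1 ⟨D, hD, C, hCE, hDC⟩
    have : C ∈ (⋃ E ∈ {E : Set Args | IsComplete att E}, DefBy att A E) ∩
         (⋃ E ∈ {E : Set Args | IsComplete att E}, NotDef att B E) := by
      constructor
      · simp only [Set.mem_iUnion]
        exact ⟨E, hE, hCE, m, hm0, hmeven, hmpath⟩
      · simp only [Set.mem_iUnion]
        exact ⟨E, hE, hCB, hnoatt⟩
    rw [h] at this
    exact this
end

section
/- Let ⟨Args, att⟩ be an argumentation framework such that the set of complete extensions is nonempty, let A ∈ Args belong to every complete extension (A is skeptically accepted), and suppose Foil(A) = {B : att B A} is nonempty. Then (⋃_{E a complete extension} DefBy(A, E)) ∩ (⋃_{B ∈ Foil(A)} ⋃_{E a complete extension} NotDef(B, E)) ≠ ∅. -/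
open AF

theorem stmt14 {Args : Type*} (att : Args → Args → Prop)
    (hne : ∃ E : Set Args, IsComplete att E) (A : Args)
    (hA : ∀ E : Set Args, IsComplete att E → A ∈ E)
    (hfoil : (Foil att A).Nonempty) :
    ((⋃ E ∈ {E : Set Args | IsComplete att E}, DefBy att A E) ∩
     (⋃ B ∈ Foil att A, ⋃ E ∈ {E : Set Args | IsComplete att E}, NotDef att B E)).Nonempty := by
  obtain ⟨E, hE⟩ := hne
  obtain ⟨B, hB⟩ := hfoil
  have hAE : A ∈ E := hA E hE
  obtain ⟨C, hCE, hCB⟩ := hE.1.2 A hAE B hB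
  refine ⟨C, ?_, ?_⟩
  · refine Set.mem_biUnion hE ⟨hCE, 2, by norm_num, by norm_num, ?_⟩
    refine ⟨fun i => if i = 0 then C else if i = 1 then B else A, rfl, rfl, ?_⟩
    intro i hi
    interval_cases i <;> simpa
  · refine Set.mem_biUnion hB (Set.mem_biUnion hE ⟨⟨1, odd_one, ?_⟩, ?_⟩)
    · exact ⟨fun i => if i = 0 then C else B, rfl, rfl, by intro i hi; interval_cases i; simpa⟩
    · rintro ⟨D, hDE, hDC⟩
      exact hE.1.1 ⟨D, hDE, C, hCE, hDC⟩
end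

section
/- Let ⟨Args, att⟩ be an argumentation framework, let A ∈ Args with Foil(A) = {B : att B A} nonempty, and suppose that for every B ∈ Foil(A) a complete extension E_B with B ∈ E_B is given (each foil is credulously accepted). Then (⋃_{E a complete extension with A ∉ E} NotDef(A, E)) ∩ (⋃_{B ∈ Foil(A)} DefBy(B, E_B)) = ∅ if and only if DefBy(B, E_B) = ∅ for every B ∈ Foil(A), which in turn holds if and only if no B ∈ Foil(A) has an attacker. -/
open AF

theorem stmt15 {Args : Type*} (att : Args → Args → Prop) (A : Args)
    (hfoil : (Foil att A).Nonempty) (EB : Args → Set Args)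
    (hEB : ∀ B ∈ Foil att A, IsComplete att (EB B) ∧ B ∈ EB B) :
    ((⋃ E ∈ {E : Set Args | IsComplete att E ∧ A ∉ E}, NotDef att A E) ∩
       (⋃ B ∈ Foil att A, DefBy att B (EB B)) = ∅ ↔
      ∀ B ∈ Foil att A, DefBy att B (EB B) = ∅) ∧
    ((∀ B ∈ Foil att A, DefBy att B (EB B) = ∅) ↔
      ¬ ∃ B ∈ Foil att A, ∃ C : Args, att C B) := by
  constructor
  · constructor
    · intro h B hB
      ext D
      simp only [Set.mem_empty_iff_false, iff_false]
      intro hD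
      obtain ⟨hDE, n, hn0, hnE, C, hC0, hCn, hCatt⟩ := hD
      obtain ⟨hComp, hBmem⟩ := hEB B hB
      have hA : A ∉ EB B := fun hA => hComp.1.1 ⟨B, hBmem, A, hA, hB⟩
      have hnotatt : ¬ SetAttacks att (EB B) D := by
        rintro ⟨C', hC', hatt⟩
        exact hComp.1.1 ⟨C', hC', D, hDE, hatt⟩
      have hind : IndAttacks att D A := by
        refine ⟨n+1, Even.add_one hnE, fun i => if i = n+1 then A else C i, ?_, ?_, ?_⟩
        · have h0 : (0:ℕ) ≠ n + 1 := by omega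
          simp [h0, hC0]
        · simp
        · intro i hi
          by_cases h' : i < n
          · have h1 : i ≠ n + 1 := by omega
            have h2 : i + 1 ≠ n + 1 := by omega
            simp only [h1, h2, if_false]
            exact hCatt i h'
          · have h3 : i = n := by omega
            have h4 : n ≠ n + 1 := by omega
            rw [h3]
            simp only [h4, if_false, if_pos rfl, hCn]
            exact hB
      have hmem : D ∈ ((⋃ E ∈ {E : Set Args | IsComplete att E ∧ A ∉ E}, NotDef att A E) ∩
          (⋃ B ∈ Foil att A, DefBy att B (EB B))) := by
        constructor
        · exact Set.mem_biUnion (show _ ∈ {E : Set Args | IsComplete att E ∧ A ∉ E} from ⟨hComp, hA⟩) ⟨hind, hnotatt⟩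
        · exact Set.mem_biUnion hB ⟨hDE, n, hn0, hnE, C, hC0, hCn, hCatt⟩
      rw [h] at hmem; exact hmem
    · intro h
      rw [Set.eq_empty_iff_forall_notMem]
      rintro D ⟨-, hD⟩
      rw [Set.mem_iUnion₂] at hD
      obtain ⟨B, hB, hDB⟩ := hD
      rw [h B hB] at hDB
      exact hDB
  · constructor
    · rintro h ⟨B, hB, C, hC⟩
      obtain ⟨hComp, hBmem⟩ := hEB B hB
      obtain ⟨D, hD, hatt⟩ := hComp.1.2 B hBmem C hC
      have hmem : D ∈ DefBy att B (EB B) := by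
        refine ⟨hD, 2, by norm_num, by norm_num,
          fun i => if i = 0 then D else if i = 1 then C else B, rfl, rfl, ?_⟩
        intro i hi
        interval_cases i <;> simpa
      rw [h B hB] at hmem; exact hmem
    · intro h B hB
      ext D
      simp only [Set.mem_empty_iff_false, iff_false]
      rintro ⟨-, n, hn0, hnE, C, hC0, hCn, hCatt⟩
      have hlast := hCatt (n-1) (by omega)
      have hn' : n - 1 + 1 = n := by omega
      rw [hn', hCn] at hlast
      exact h ⟨B, hB, C (n-1), hlast⟩
end

section
/- There exists an argumentation framework ⟨Args, att⟩ and an argument A ∈ Args such that A is skeptically non-accepted with respect to admissible semantics (some admissible set does not contain A), and yet ⋃_{E admissible with A ∉ E} NotDef(A, E) = ∅. (Hence the non-emptiness of non-acceptance explanations fails for admissible semantics, in contrast to complete semantics.) -/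
open AF

theorem stmt18 :
    ∃ (Args : Type) (att : Args → Args → Prop) (A : Args),
      (∃ E : Set Args, Admissible att E ∧ A ∉ E) ∧
      (⋃ E ∈ {E : Set Args | Admissible att E ∧ A ∉ E}, NotDef att A E) = ∅ := by
  refine ⟨Unit, fun _ _ => False, (), ⟨∅, ⟨?_, ?_⟩, by simp⟩, ?_⟩
  · rintro ⟨C, hC, -⟩; exact hC
  · rintro A hA; exact absurd hA (by simp)
  · ext B
    simp only [Set.mem_iUnion, Set.mem_empty_iff_false, iff_false]
    rintro ⟨E, -, hB⟩
    obtain ⟨⟨n, hodd, C, -, -, hatt⟩, -⟩ := hB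
    exact hatt 0 hodd.pos
end
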